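/- Let a ∈ ℕ^n with all coordinates positive, n ≥ 1. Let A₀, B₀ ⊆ ℕ with {0,1} ⊆ A₀ and 0 ∈ B₀. Set F₀ = A₀·a = {k·a : k ∈ A₀} and G₀ = B₀·a ⊕ L_a, where L_a = ℕ^n \ (ℕ^n + a). Let Ω ⊆ ℕ·a and suppose F₁, G₁ ⊆ ℕ^n are sets such that (F₀ ⊕ G₁) ∪ (F₁ ⊕ G₀) = Ω ⊕ L_a, the union is disjoint, and both sums F₀ + G₁, F₁ + G₀ and Ω + L_a are direct. Then F₁ = A₁·a and G₁ = B₁·a ⊕ L_a for some subsets A₁, B₁ ⊆ ℕ. -/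

import Mathlib

/-!
Every `x ∈ ℕⁿ` is uniquely `k • a + ℓ` with `ℓ ∈ L_a`; call `k` the layer of `x`. Both `Ω ⊕ L_a`
and `G₀ = B₀·a ⊕ L_a` are unions of whole layers. By induction on `k`, `F₁` meets layer `k` at most
in `k • a`, and `G₁` contains all of layer `k` as soon as it meets it: an element violating either
claim produces a point of `Ω ⊕ L_a` on its layer that can lie neither in `F₀ + G₁` nor in
`F₁ + G₀`, by disjointness and uniqueness of the decompositions.
-/

open Pointwise

/-- Unique decompositions: every sum `a + b` with `a ∈ A`, `b ∈ B` determines `a` and `b`. -/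
def UniqueSumsOn {α : Type*} [Add α] (A B : Set α) : Prop :=
  ∀ a ∈ A, ∀ b ∈ B, ∀ a' ∈ A, ∀ b' ∈ B, a + b = a' + b' → a = a' ∧ b = b'

/-- `C = A ⊕ B`: `C` is the direct sum of `A` and `B`. -/
def IsDirectSum {α : Type*} [Add α] (A B C : Set α) : Prop :=
  C = A + B ∧ UniqueSumsOn A B


/-- `L_a = ℕ^n \ (ℕ^n + a)`. -/
def La {n : ℕ} (a : Fin n → ℕ) : Set (Fin n → ℕ) :=
  Set.univ \ {x | ∃ y : Fin n → ℕ, x = y + a}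

def multiples {M : Type*} [AddMonoid M] (A : Set ℕ) (a : M) : Set M := {x | ∃ k ∈ A, x = k • a}

/-- `S = (F₀ ⊕ G₁) ⊔ (F₁ ⊕ G₀)`; in generating functions, `F₀ G₁ + F₁ G₀ = S`. -/
structure IsSplitting {α : Type*} [Add α] (F₀ G₀ F₁ G₁ S : Set α) : Prop where
  union_eq : (F₀ + G₁) ∪ (F₁ + G₀) = S
  disjoint : Disjoint (F₀ + G₁) (F₁ + G₀)
  uniqueSumsOn_left : UniqueSumsOn F₀ G₁
  uniqueSumsOn_right : UniqueSumsOn F₁ G₀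

namespace IsSplitting

variable {α : Type*} [Add α] {F₀ G₀ F₁ G₁ S : Set α}

lemma add_left_subset (h : IsSplitting F₀ G₀ F₁ G₁ S) : F₀ + G₁ ⊆ S :=
  h.union_eq ▸ Set.subset_union_left

lemma add_right_subset (h : IsSplitting F₀ G₀ F₁ G₁ S) : F₁ + G₀ ⊆ S :=
  h.union_eq ▸ Set.subset_union_right

lemma mem_or_mem (h : IsSplitting F₀ G₀ F₁ G₁ S) {x : α} (hx : x ∈ S) :
    x ∈ F₀ + G₁ ∨ x ∈ F₁ + G₀ := by
  rwa [← h.union_eq] at hx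

lemma notMem_right_of_mem_left (h : IsSplitting F₀ G₀ F₁ G₁ S) {x : α} (hx : x ∈ F₀ + G₁) :
    x ∉ F₁ + G₀ :=
  Set.disjoint_left.1 h.disjoint hx

end IsSplitting

lemma Pi.exists_eq_add_single_one {ι : Type*} [DecidableEq ι] {x : ι → ℕ} {i : ι} (hi : x i ≠ 0) :
    ∃ y : ι → ℕ, x = y + Pi.single i 1 :=
  ⟨Function.update x i (x i - 1), funext fun j => by
    by_cases hj : j = i
    · subst hj; simp; omega
    · simp [hj]⟩

section La

variable {n : ℕ} {a : Fin n → ℕ}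

lemma mem_La_iff {ℓ : Fin n → ℕ} : ℓ ∈ La a ↔ ∃ i, ℓ i < a i := by
  simp only [La, Set.mem_sdiff, Set.mem_univ, true_and, Set.mem_ofPred_eq, not_exists]
  constructor
  · intro h
    by_contra! hc
    exact h (ℓ - a) (tsub_add_cancel_of_le hc).symm
  · rintro ⟨i, hi⟩ y rfl
    simp at hi

lemma mem_La_of_le {ℓ ℓ' : Fin n → ℕ} (hle : ℓ' ≤ ℓ) (hℓ : ℓ ∈ La a) : ℓ' ∈ La a := by
  obtain ⟨i, hi⟩ := mem_La_iff.1 hℓ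
  exact mem_La_iff.2 ⟨i, (hle i).trans_lt hi⟩

lemma le_of_smul_le_smul_add {j k : ℕ} {ℓ : Fin n → ℕ} (hℓ : ℓ ∈ La a)
    (h : j • a ≤ k • a + ℓ) : j ≤ k := by
  obtain ⟨i, hi⟩ := mem_La_iff.1 hℓ
  have hji : j * a i < (k + 1) * a i := by
    have := h i
    simp only [Pi.add_apply, Pi.smul_apply, smul_eq_mul] at this
    rw [add_mul, one_mul]
    omega
  exact Nat.lt_succ_iff.1 (Nat.lt_of_mul_lt_mul_right hji)

lemma smul_add_inj {k k' : ℕ} {ℓ ℓ' : Fin n → ℕ} (hℓ : ℓ ∈ La a) (hℓ' : ℓ' ∈ La a)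
    (h : k • a + ℓ = k' • a + ℓ') : k = k' ∧ ℓ = ℓ' := by
  have hk : k = k' := le_antisymm
    (le_of_smul_le_smul_add hℓ' (h ▸ le_self_add))
    (le_of_smul_le_smul_add hℓ (h.symm ▸ le_self_add))
  subst hk
  exact ⟨rfl, add_left_cancel h⟩

lemma eq_smul_add_of_smul_add_eq {j k : ℕ} {x ℓ : Fin n → ℕ} (hℓ : ℓ ∈ La a)
    (h : j • a + x = k • a + ℓ) : j ≤ k ∧ x = (k - j) • a + ℓ := by
  have hjk : j ≤ k := le_of_smul_le_smul_add hℓ (h ▸ le_self_add)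
  refine ⟨hjk, add_left_cancel (a := j • a) ?_⟩
  rw [h, ← add_assoc, ← add_smul, Nat.add_sub_cancel' hjk]

lemma exists_eq_smul_add (hn : 1 ≤ n) (ha : ∀ i, 0 < a i) (x : Fin n → ℕ) :
    ∃ k : ℕ, ∃ ℓ ∈ La a, x = k • a + ℓ := by
  obtain ⟨i₀, -, hmin⟩ := Finset.univ.exists_min_image (fun i => x i / a i)
    ⟨⟨0, hn⟩, Finset.mem_univ _⟩
  have hle : (x i₀ / a i₀) • a ≤ x := fun i => show x i₀ / a i₀ * a i ≤ x i from
    calc x i₀ / a i₀ * a i ≤ x i / a i * a i :=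
          Nat.mul_le_mul_right _ (hmin i (Finset.mem_univ i))
      _ ≤ x i := Nat.div_mul_le_self _ _
  refine ⟨x i₀ / a i₀, x - (x i₀ / a i₀) • a, mem_La_iff.2 ⟨i₀, ?_⟩, ?_⟩
  · have := Nat.lt_div_mul_add (a := x i₀) (ha i₀)
    have := hle i₀
    simp only [Pi.sub_apply, Pi.smul_apply, smul_eq_mul] at this ⊢
    omega
  · rw [add_tsub_cancel_of_le hle]

lemma smul_add_mem_multiples_add_La_iff {B : Set ℕ} {k : ℕ} {ℓ : Fin n → ℕ}
    (hℓ : ℓ ∈ La a) : k • a + ℓ ∈ multiples B a + La a ↔ k ∈ B := by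
  constructor
  · rintro ⟨_, ⟨m, hm, rfl⟩, ℓ', hℓ', h⟩
    rwa [← (smul_add_inj hℓ' hℓ h).1]
  · exact fun hk => Set.add_mem_add ⟨k, hk, rfl⟩ hℓ

lemma uniqueSumsOn_multiples_La (B : Set ℕ) : UniqueSumsOn (multiples B a) (La a) := by
  rintro _ ⟨k, -, rfl⟩ ℓ hℓ _ ⟨k', -, rfl⟩ ℓ' hℓ' h
  obtain ⟨rfl, rfl⟩ := smul_add_inj hℓ hℓ' h
  exact ⟨rfl, rfl⟩

lemma eq_multiples_of_subset {X : Set (Fin n → ℕ)} (h : X ⊆ {x | ∃ k : ℕ, x = k • a}) :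
    X = multiples {k | k • a ∈ X} a := by
  ext x
  constructor
  · intro hx
    obtain ⟨k, rfl⟩ := h hx
    exact ⟨k, hx, rfl⟩
  · rintro ⟨k, hk, rfl⟩
    exact hk

lemma La_subset_multiples_add_La {B : Set ℕ} (hB : 0 ∈ B) :
    La a ⊆ multiples B a + La a :=
  fun ℓ hℓ => ⟨0, ⟨0, hB, (zero_smul ℕ a).symm⟩, ℓ, hℓ, zero_add ℓ⟩

end La

section Layers

variable {n : ℕ}

def IsFlatAt (a : Fin n → ℕ) (X : Set (Fin n → ℕ)) (k : ℕ) : Prop :=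
  ∀ ℓ ∈ La a, k • a + ℓ ∈ X → ℓ = 0

def IsSaturatedAt (a : Fin n → ℕ) (X : Set (Fin n → ℕ)) (k : ℕ) : Prop :=
  ∀ ℓ₀ ∈ La a, k • a + ℓ₀ ∈ X → ∀ ℓ ∈ La a, k • a + ℓ ∈ X

lemma subset_of_forall_isFlatAt {a : Fin n → ℕ} (hn : 1 ≤ n) (ha : ∀ i, 0 < a i)
    {X : Set (Fin n → ℕ)} (h : ∀ k, IsFlatAt a X k) : X ⊆ {x | ∃ k : ℕ, x = k • a} := by
  intro x hx
  obtain ⟨k, ℓ, hℓ, rfl⟩ := exists_eq_smul_add hn ha x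
  exact ⟨k, by rw [h k ℓ hℓ hx, add_zero]⟩

lemma eq_multiples_add_La_of_forall_isSaturatedAt {a : Fin n → ℕ} (hn : 1 ≤ n)
    (ha : ∀ i, 0 < a i) {X : Set (Fin n → ℕ)} (h : ∀ k, IsSaturatedAt a X k) :
    X = multiples {k | k • a ∈ X} a + La a := by
  have h0 : (0 : Fin n → ℕ) ∈ La a := mem_La_iff.2 ⟨⟨0, hn⟩, ha _⟩
  ext x
  constructor
  · intro hx
    obtain ⟨k, ℓ, hℓ, rfl⟩ := exists_eq_smul_add hn ha x
    exact Set.add_mem_add ⟨k, by simpa using h k ℓ hℓ hx 0 h0, rfl⟩ hℓ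
  · rintro ⟨_, ⟨k, hk, rfl⟩, ℓ, hℓ, rfl⟩
    exact h k 0 h0 (by simpa using hk) ℓ hℓ

end Layers

section Splitting

variable {n : ℕ} {a : Fin n → ℕ} {A₀ B₀ C : Set ℕ} {F₁ G₁ : Set (Fin n → ℕ)} {k : ℕ}

lemma notMem_left_of_add_single_mem {i : Fin n} {ℓ : Fin n → ℕ} (ha : 0 < a i)
    (h1 : 1 ∈ A₀) (hB : 0 ∈ B₀)
    (hs : IsSplitting (multiples A₀ a) (multiples B₀ a + La a) F₁ G₁ (multiples C a + La a))
    (hG : ∀ j < k, IsSaturatedAt a G₁ j) (hℓ : ℓ + Pi.single i 1 ∈ La a)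
    (hf : k • a + (ℓ + Pi.single i 1) ∈ F₁) : k • a + ℓ ∉ multiples A₀ a + G₁ := by
  have hℓ' : ℓ ∈ La a := mem_La_of_le le_self_add hℓ
  rintro ⟨_, ⟨j, hj, rfl⟩, g, hg, hy⟩
  obtain ⟨hjk, rfl⟩ := eq_smul_add_of_smul_add_eq hℓ' hy
  rcases Nat.eq_zero_or_pos j with rfl | hj0
  · obtain ⟨a', ha'⟩ := Pi.exists_eq_add_single_one ha.ne'
    have ha'La : a' ∈ La a := mem_La_iff.2 ⟨i, by rw [ha']; simp⟩
    -- both parts contain `a + (k • a + ℓ) = k • a + (ℓ + eᵢ) + (a - eᵢ)`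
    apply hs.notMem_right_of_mem_left (Set.add_mem_add ⟨1, h1, (one_smul ℕ a).symm⟩ hg)
    convert Set.add_mem_add hf (La_subset_multiples_add_La hB ha'La) using 1
    rw [Nat.sub_zero]
    nth_rw 1 [ha']
    abel
  · have hsat := hG (k - j) (by omega) ℓ hℓ' hg (ℓ + Pi.single i 1) hℓ
    refine hs.notMem_right_of_mem_left ?_ (Set.subset_add_left _
      (La_subset_multiples_add_La hB (mem_La_of_le zero_le hℓ)) hf)
    convert Set.add_mem_add (show j • a ∈ multiples A₀ a from ⟨j, hj, rfl⟩) hsat using 1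
    rw [← add_assoc (j • a), ← add_smul, Nat.add_sub_cancel' hjk]

lemma notMem_right_of_add_single_mem (hn : 1 ≤ n) (ha : ∀ i, 0 < a i) {i : Fin n}
    {ℓ : Fin n → ℕ} (hB : 0 ∈ B₀)
    (hs : IsSplitting (multiples A₀ a) (multiples B₀ a + La a) F₁ G₁ (multiples C a + La a))
    (hF : ∀ j < k, IsFlatAt a F₁ j) (hℓ : ℓ + Pi.single i 1 ∈ La a)
    (hf : k • a + (ℓ + Pi.single i 1) ∈ F₁) : k • a + ℓ ∉ F₁ + (multiples B₀ a + La a) := by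
  have hℓ' : ℓ ∈ La a := mem_La_of_le le_self_add hℓ
  rintro ⟨f, hf', _, ⟨_, ⟨m, hm, rfl⟩, ℓ₂, hℓ₂, rfl⟩, hy⟩
  beta_reduce at hy
  obtain ⟨k₁, w₁, hw₁, rfl⟩ := exists_eq_smul_add hn ha f
  have hk₁ : k₁ ≤ k := le_of_smul_le_smul_add hℓ' (hy ▸ le_self_add.trans le_self_add)
  -- so that `m • a + (ℓ₂ + eᵢ) ∈ G₀` gives a second decomposition of `k • a + (ℓ + eᵢ) + 0`
  have hℓ₂ℓ : ℓ₂ ≤ ℓ := by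
    rcases hk₁.lt_or_eq with hlt | rfl
    · obtain rfl := hF k₁ hlt w₁ hw₁ hf'
      exact (smul_add_inj (k := k₁ + m) (k' := k) hℓ₂ hℓ' (by rw [← hy, add_smul]; abel)).2.le
    · rw [add_left_cancel (a := k₁ • a) (b := ℓ) (c := w₁ + m • a + ℓ₂) (by rw [← hy]; abel)]
      exact le_add_self
  have hmem : m • a + (ℓ₂ + Pi.single i 1) ∈ multiples B₀ a + La a :=
    Set.add_mem_add ⟨m, hm, rfl⟩ (mem_La_of_le (add_le_add_left hℓ₂ℓ _) hℓ)
  have h0 : (0 : Fin n → ℕ) ∈ multiples B₀ a + La a :=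
    La_subset_multiples_add_La hB (mem_La_of_le zero_le hℓ)
  have heq : k • a + (ℓ + Pi.single i 1) + 0 =
      k₁ • a + w₁ + (m • a + (ℓ₂ + Pi.single i 1)) := by
    rw [add_zero, ← add_assoc (k • a), ← hy]
    abel
  have := congrFun (hs.uniqueSumsOn_right _ hf 0 h0 _ hf' _ hmem heq).2 i
  simp at this

lemma isFlatAt_of_forall_lt (hn : 1 ≤ n) (ha : ∀ i, 0 < a i) (h1 : 1 ∈ A₀) (hB : 0 ∈ B₀)
    (hs : IsSplitting (multiples A₀ a) (multiples B₀ a + La a) F₁ G₁ (multiples C a + La a))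
    (hF : ∀ j < k, IsFlatAt a F₁ j) (hG : ∀ j < k, IsSaturatedAt a G₁ j) :
    IsFlatAt a F₁ k := by
  intro ℓf hℓf hf
  by_contra hne
  obtain ⟨i, hi⟩ := Function.ne_iff.1 hne
  obtain ⟨ℓ, rfl⟩ := Pi.exists_eq_add_single_one hi
  have hℓ : ℓ ∈ La a := mem_La_of_le le_self_add hℓf
  have hkC : k ∈ C := (smul_add_mem_multiples_add_La_iff hℓf).1 <| hs.add_right_subset <|
    Set.subset_add_left _ (La_subset_multiples_add_La hB (mem_La_of_le zero_le hℓf)) hf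
  rcases hs.mem_or_mem ((smul_add_mem_multiples_add_La_iff hℓ).2 hkC) with hy | hy
  · exact notMem_left_of_add_single_mem (ha i) h1 hB hs hG hℓf hf hy
  · exact notMem_right_of_add_single_mem hn ha hB hs hF hℓf hf hy

lemma isSaturatedAt_of_forall_lt (hn : 1 ≤ n) (ha : ∀ i, 0 < a i) (h0 : 0 ∈ A₀)
    (hs : IsSplitting (multiples A₀ a) (multiples B₀ a + La a) F₁ G₁ (multiples C a + La a))
    (hF : ∀ j ≤ k, IsFlatAt a F₁ j) (hG : ∀ j < k, IsSaturatedAt a G₁ j) :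
    IsSaturatedAt a G₁ k := by
  intro ℓ₀ hℓ₀ hg ℓ hℓ
  have h0A₀ : 0 ∈ multiples A₀ a := ⟨0, h0, (zero_smul ℕ a).symm⟩
  have hg' : k • a + ℓ₀ ∈ multiples A₀ a + G₁ := Set.subset_add_right _ h0A₀ hg
  have hkC : k ∈ C := (smul_add_mem_multiples_add_La_iff hℓ₀).1 (hs.add_left_subset hg')
  rcases hs.mem_or_mem ((smul_add_mem_multiples_add_La_iff hℓ).2 hkC) with
    ⟨_, ⟨j, hj, rfl⟩, g, hgG, hx⟩ | ⟨f, hf, _, ⟨_, ⟨m, hm, rfl⟩, ℓ₂, hℓ₂, rfl⟩, hx⟩ <;>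
    beta_reduce at hx
  · obtain ⟨hjk, rfl⟩ := eq_smul_add_of_smul_add_eq hℓ hx
    rcases Nat.eq_zero_or_pos j with rfl | hj0
    · simpa using hgG
    -- otherwise `0 + (k • a + ℓ₀) = j • a + ((k - j) • a + ℓ₀)` decomposes it twice
    have hsat := hG (k - j) (by omega) ℓ hℓ hgG ℓ₀ hℓ₀
    have hg₀ := (hs.uniqueSumsOn_left _ h0A₀ _ hg _ ⟨j, hj, rfl⟩ _ hsat
      (by rw [zero_add, ← add_assoc, ← add_smul, Nat.add_sub_cancel' hjk])).2
    have := (smul_add_inj hℓ₀ hℓ₀ hg₀).1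
    omega
  · obtain ⟨k₁, w₁, hw₁, rfl⟩ := exists_eq_smul_add hn ha f
    have hk₁ : k₁ ≤ k := le_of_smul_le_smul_add hℓ (hx ▸ le_self_add.trans le_self_add)
    obtain rfl := hF k₁ hk₁ w₁ hw₁ hf
    have hkm : k₁ + m = k :=
      (smul_add_inj (k := k₁ + m) (k' := k) hℓ₂ hℓ (by rw [← hx, add_smul]; abel)).1
    refine absurd ?_ (hs.notMem_right_of_mem_left hg')
    convert Set.add_mem_add hf
      (Set.add_mem_add (show m • a ∈ multiples B₀ a from ⟨m, hm, rfl⟩) hℓ₀) using 1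
    rw [add_zero, ← add_assoc, ← add_smul, hkm]

end Splitting

theorem stmt19_general {n : ℕ} (hn : 1 ≤ n) (a : Fin n → ℕ) (ha : ∀ i, 0 < a i)
    (A₀ B₀ : Set ℕ) (h0 : 0 ∈ A₀) (h1 : 1 ∈ A₀) (hB : 0 ∈ B₀)
    (F₀ G₀ : Set (Fin n → ℕ))
    (hF₀ : F₀ = {x | ∃ k ∈ A₀, x = k • a})
    (hG₀ : G₀ = {x : Fin n → ℕ | ∃ k ∈ B₀, x = k • a} + La a)
    (Ω : Set (Fin n → ℕ)) (hΩ : Ω ⊆ {x | ∃ k : ℕ, x = k • a})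
    (F₁ G₁ : Set (Fin n → ℕ))
    (hcover : (F₀ + G₁) ∪ (F₁ + G₀) = Ω + La a)
    (hdisj : Disjoint (F₀ + G₁) (F₁ + G₀))
    (hd₁ : UniqueSumsOn F₀ G₁) (hd₂ : UniqueSumsOn F₁ G₀) :
    ∃ A₁ B₁ : Set ℕ,
      F₁ = {x | ∃ k ∈ A₁, x = k • a} ∧
      G₁ = {x : Fin n → ℕ | ∃ k ∈ B₁, x = k • a} + La a ∧
      UniqueSumsOn {x : Fin n → ℕ | ∃ k ∈ B₁, x = k • a} (La a) := by
  subst hF₀ hG₀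
  rw [eq_multiples_of_subset hΩ] at hcover
  have hs : IsSplitting (multiples A₀ a) (multiples B₀ a + La a) F₁ G₁
      (multiples {k | k • a ∈ Ω} a + La a) := ⟨hcover, hdisj, hd₁, hd₂⟩
  have hlayers : ∀ k, IsFlatAt a F₁ k ∧ IsSaturatedAt a G₁ k := by
    intro k
    induction k using Nat.strong_induction_on with
    | _ k ih =>
      have hF : IsFlatAt a F₁ k :=
        isFlatAt_of_forall_lt hn ha h1 hB hs (fun j hj => (ih j hj).1) (fun j hj => (ih j hj).2)
      refine ⟨hF, isSaturatedAt_of_forall_lt hn ha h0 hs (fun j hj => ?_) fun j hj => (ih j hj).2⟩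
      rcases hj.lt_or_eq with hj | rfl
      exacts [(ih j hj).1, hF]
  exact ⟨_, _, eq_multiples_of_subset (subset_of_forall_isFlatAt hn ha fun k => (hlayers k).1),
    eq_multiples_add_La_of_forall_isSaturatedAt hn ha fun k => (hlayers k).2,
    uniqueSumsOn_multiples_La _⟩

theorem stmt19 {n : ℕ} (hn : 1 ≤ n) (a : Fin n → ℕ) (ha : ∀ i, 0 < a i)
    (A₀ B₀ : Set ℕ) (h0 : 0 ∈ A₀) (h1 : 1 ∈ A₀) (hB : 0 ∈ B₀)
    (F₀ G₀ : Set (Fin n → ℕ))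
    (hF₀ : F₀ = {x | ∃ k ∈ A₀, x = k • a})
    (hG₀ : G₀ = {x : Fin n → ℕ | ∃ k ∈ B₀, x = k • a} + La a)
    (hG₀d : UniqueSumsOn {x : Fin n → ℕ | ∃ k ∈ B₀, x = k • a} (La a))
    (Ω : Set (Fin n → ℕ)) (hΩ : Ω ⊆ {x | ∃ k : ℕ, x = k • a})
    (F₁ G₁ : Set (Fin n → ℕ))
    (hcover : (F₀ + G₁) ∪ (F₁ + G₀) = Ω + La a)
    (hdisj : Disjoint (F₀ + G₁) (F₁ + G₀))
    (hd₁ : UniqueSumsOn F₀ G₁) (hd₂ : UniqueSumsOn F₁ G₀)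
    (hd₃ : UniqueSumsOn Ω (La a)) :
    ∃ A₁ B₁ : Set ℕ,
      F₁ = {x | ∃ k ∈ A₁, x = k • a} ∧
      G₁ = {x : Fin n → ℕ | ∃ k ∈ B₁, x = k • a} + La a ∧
      UniqueSumsOn {x : Fin n → ℕ | ∃ k ∈ B₁, x = k • a} (La a) :=
  stmt19_general hn a ha A₀ B₀ h0 h1 hB F₀ G₀ hF₀ hG₀ Ω hΩ F₁ G₁ hcover hdisj hd₁ hd₂
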